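/- arXiv:2010.15116 — 6 statements merged into one kernel-verified Lean document; each statement's English description precedes it below -/
import Mathlib

section
/- Let n ≥ 2 and let α be a real number with α > (log n)/(log n − log(n−1)). Then the function h_α mapping a multiset S of positive integers (each between 1 and n, with |S| ≤ n) to ∑_{u∈S} u^(−α) is injective on the set of such multisets. -/
private lemma key_ineq (n i j : ℕ) (hn : 2 ≤ n) (hi : 1 ≤ i) (hij : i < j) (hj : j ≤ n)
    (α : ℝ) (hα : α > Real.log n / (Real.log n - Real.log (n - 1))) :
    (n : ℝ) * (j : ℝ) ^ (-α) < (i : ℝ) ^ (-α) := by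
  have hn1 : (1 : ℝ) ≤ (n : ℝ) - 1 := by
    have : (2:ℝ) ≤ n := by exact_mod_cast hn
    linarith
  have hnpos : (0:ℝ) < n := by linarith
  have hlogn : 0 < Real.log n := Real.log_pos (by linarith)
  have hden : 0 < Real.log n - Real.log (n - 1) := by
    have := Real.log_lt_log (by linarith : (0:ℝ) < (n:ℝ) - 1) (by linarith : (n:ℝ) - 1 < n)
    linarith
  have hαpos : 0 < α := lt_trans (div_pos hlogn hden) hα
  have hiR : (1:ℝ) ≤ (i:ℝ) := by exact_mod_cast hi
  have hipos : (0:ℝ) < i := by linarith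
  have hjpos : (0:ℝ) < j := by
    have : 0 < j := lt_of_le_of_lt (Nat.zero_le i) hij
    exact_mod_cast this
  have h1 : (n:ℝ) < ((n:ℝ) / ((n:ℝ) - 1)) ^ α := by
    have hb : (0:ℝ) < (n:ℝ) / ((n:ℝ) - 1) := by positivity
    rw [Real.rpow_def_of_pos hb, Real.log_div (by linarith) (by linarith)]
    have := (div_lt_iff₀ hden).mp hα
    calc (n:ℝ) = Real.exp (Real.log n) := (Real.exp_log hnpos).symm
      _ < _ := Real.exp_lt_exp.mpr (by linarith)
  have h2 : (n:ℝ) / ((n:ℝ) - 1) ≤ (j:ℝ) / i := by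
    rw [div_le_div_iff₀ (by linarith) hipos]
    have hjR : (i:ℝ) + 1 ≤ (j:ℝ) := by exact_mod_cast Nat.succ_le_of_lt hij
    have hi1n : (i:ℝ) + 1 ≤ n := by exact_mod_cast Nat.succ_le_of_lt (lt_of_lt_of_le hij hj)
    nlinarith
  have h3 : (n:ℝ) < ((j:ℝ) / i) ^ α :=
    lt_of_lt_of_le h1 (Real.rpow_le_rpow (by positivity) h2 hαpos.le)
  have h4 : ((j:ℝ)/i) ^ α = (j:ℝ) ^ α / (i:ℝ) ^ α := Real.div_rpow hjpos.le hipos.le α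
  have hjα : (0:ℝ) < (j:ℝ) ^ α := Real.rpow_pos_of_pos hjpos α
  have hiα : (0:ℝ) < (i:ℝ) ^ α := Real.rpow_pos_of_pos hipos α
  have h5 : (n:ℝ) * (i:ℝ)^α < (j:ℝ)^α := by
    rw [h4, lt_div_iff₀ hiα] at h3
    exact h3
  rw [Real.rpow_neg hjpos.le, Real.rpow_neg hipos.le, inv_eq_one_div, inv_eq_one_div,
    ← mul_div_assoc, div_lt_div_iff₀ hjα hiα]
  nlinarith

private lemma aux_lem (n : ℕ) (hn : 2 ≤ n) (α : ℝ)
    (hα : α > Real.log n / (Real.log n - Real.log (n - 1)))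
    (c c' : ℕ → ℕ)
    (hc' : ∑ i ∈ Finset.Icc 1 n, c' i ≤ n)
    (h : ∑ i ∈ Finset.Icc 1 n, (c i : ℝ) * (i : ℝ) ^ (-α)
        = ∑ i ∈ Finset.Icc 1 n, (c' i : ℝ) * (i : ℝ) ^ (-α))
    (i : ℕ) (hi1 : 1 ≤ i) (hin : i ≤ n)
    (hmin : ∀ k, 1 ≤ k → k < i → c k = c' k)
    (hlt : c' i < c i) : False := by
  have hipos : (0:ℝ) < i := by exact_mod_cast hi1
  have hiα : (0:ℝ) < (i:ℝ) ^ (-α) := Real.rpow_pos_of_pos hipos _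
  have hdisj : Disjoint (Finset.Ico 1 i) (Finset.Icc i n) := by
    rw [Finset.disjoint_left]
    intro a ha hb
    exact absurd (Finset.mem_Icc.mp hb).1 (not_le.mpr (Finset.mem_Ico.mp ha).2)
  have hsplit : ∀ d : ℕ → ℕ,
      ∑ k ∈ Finset.Icc 1 n, (d k : ℝ) * (k : ℝ) ^ (-α)
      = (∑ k ∈ Finset.Ico 1 i, (d k : ℝ) * (k : ℝ) ^ (-α))
        + ((d i : ℝ) * (i:ℝ)^(-α)
        + ∑ k ∈ Finset.Ioc i n, (d k : ℝ) * (k : ℝ) ^ (-α)) := by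
    intro d
    rw [← Finset.Ico_add_one_right_eq_Icc 1 n, ← Finset.sum_Ico_consecutive _ (k := n + 1) hi1 (Nat.le_succ_of_le hin),
      Finset.Ico_add_one_right_eq_Icc, Finset.Icc_eq_cons_Ioc hin, Finset.sum_cons]
  rw [hsplit c, hsplit c'] at h
  have hhead : ∑ k ∈ Finset.Ico 1 i, (c k : ℝ) * (k : ℝ) ^ (-α)
      = ∑ k ∈ Finset.Ico 1 i, (c' k : ℝ) * (k : ℝ) ^ (-α) := by
    refine Finset.sum_congr rfl fun k hk => ?_
    rw [hmin k (Finset.mem_Ico.mp hk).1 (Finset.mem_Ico.mp hk).2]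
  rw [hhead] at h
  have heq : ((c i : ℝ) - c' i) * (i:ℝ)^(-α)
      = ∑ k ∈ Finset.Ioc i n, ((c' k : ℝ) * (k : ℝ) ^ (-α) - (c k : ℝ) * (k : ℝ) ^ (-α)) := by
    rw [Finset.sum_sub_distrib]
    linarith
  have hone : (1:ℝ) ≤ (c i : ℝ) - c' i := by
    have : (c' i : ℝ) + 1 ≤ c i := by exact_mod_cast Nat.succ_le_of_lt hlt
    linarith
  have hub : ∑ k ∈ Finset.Ioc i n, ((c' k : ℝ) * (k : ℝ) ^ (-α) - (c k : ℝ) * (k : ℝ) ^ (-α))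
      ≤ ∑ k ∈ Finset.Ioc i n, (c' k : ℝ) * (k : ℝ) ^ (-α) := by
    refine Finset.sum_le_sum fun k hk => ?_
    have hk0 : (0:ℝ) < k := by
      have : 0 < k := lt_of_le_of_lt (Nat.zero_le i) (Finset.mem_Ioc.mp hk).1
      exact_mod_cast this
    have : (0:ℝ) ≤ (c k : ℝ) * (k : ℝ) ^ (-α) :=
      mul_nonneg (Nat.cast_nonneg _) (Real.rpow_pos_of_pos hk0 _).le
    linarith
  have hlow : (i:ℝ)^(-α) ≤ ∑ k ∈ Finset.Ioc i n, (c' k : ℝ) * (k : ℝ) ^ (-α) := by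
    calc (i:ℝ)^(-α) = 1 * (i:ℝ)^(-α) := (one_mul _).symm
      _ ≤ ((c i : ℝ) - c' i) * (i:ℝ)^(-α) := by
          exact mul_le_mul_of_nonneg_right hone hiα.le
      _ ≤ _ := by rw [heq]; exact hub
  rcases eq_or_lt_of_le hin with rfl | hin'
  · rw [Finset.Ioc_self, Finset.sum_empty] at hlow
    linarith
  · -- i + 1 ≤ n case
    have hαpos : 0 < α := by
      have h2n : (2:ℝ) ≤ n := by exact_mod_cast hn
      have hlogn : 0 < Real.log n := Real.log_pos (by linarith)
      have hden : 0 < Real.log n - Real.log (n - 1) := by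
        have := Real.log_lt_log (by linarith : (0:ℝ) < (n:ℝ) - 1) (by linarith : (n:ℝ) - 1 < n)
        linarith
      exact lt_trans (div_pos hlogn hden) hα
    have hsucc : (0:ℝ) < ((i+1 : ℕ) : ℝ) := by exact_mod_cast Nat.succ_pos i
    have hub2 : ∑ k ∈ Finset.Ioc i n, (c' k : ℝ) * (k : ℝ) ^ (-α)
        ≤ (∑ k ∈ Finset.Ioc i n, (c' k : ℝ)) * ((i+1 : ℕ) : ℝ) ^ (-α) := by
      rw [Finset.sum_mul]
      refine Finset.sum_le_sum fun k hk => ?_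
      have hk1 : i < k := (Finset.mem_Ioc.mp hk).1
      have hkR : ((i+1:ℕ):ℝ) ≤ (k:ℝ) := by exact_mod_cast Nat.succ_le_of_lt hk1
      have hkpow : (k:ℝ)^(-α) ≤ ((i+1:ℕ):ℝ)^(-α) :=
        Real.rpow_le_rpow_of_nonpos (by positivity) hkR (neg_nonpos.mpr hαpos.le)
      exact mul_le_mul_of_nonneg_left hkpow (Nat.cast_nonneg _)
    have hcs : (∑ k ∈ Finset.Ioc i n, (c' k : ℝ)) ≤ (n:ℝ) := by
      have hsub : Finset.Ioc i n ⊆ Finset.Icc 1 n := by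
        intro a ha
        rw [Finset.mem_Icc]
        rcases Finset.mem_Ioc.mp ha with ⟨h1, h2⟩
        exact ⟨le_trans hi1 h1.le, h2⟩
      have := Finset.sum_le_sum_of_subset_of_nonneg hsub (fun k _ _ => Nat.zero_le (c' k))
      calc (∑ k ∈ Finset.Ioc i n, (c' k : ℝ)) = ((∑ k ∈ Finset.Ioc i n, c' k : ℕ) : ℝ) := by
            push_cast; ring
        _ ≤ (n:ℝ) := by exact_mod_cast le_trans this hc'
    have hkey := key_ineq n i (i+1) hn hi1 (Nat.lt_succ_self i) hin' α hα
    have hpow1 : (0:ℝ) ≤ ((i+1:ℕ):ℝ)^(-α) := (Real.rpow_pos_of_pos hsucc _).le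
    have : (∑ k ∈ Finset.Ioc i n, (c' k : ℝ)) * ((i+1 : ℕ) : ℝ) ^ (-α)
        ≤ (n:ℝ) * ((i+1 : ℕ) : ℝ) ^ (-α) := mul_le_mul_of_nonneg_right hcs hpow1
    linarith

/-- Injectivity of `h_α` on multisets of at most `n` positive integers `≤ n`,
encoded as multiplicity functions `c : ℕ → ℕ` supported on `{1,…,n}`. -/
theorem stmt_0 (n : ℕ) (hn : 2 ≤ n) (α : ℝ)
    (hα : α > Real.log n / (Real.log n - Real.log (n - 1)))
    (c c' : ℕ → ℕ)
    (hc : ∑ i ∈ Finset.Icc 1 n, c i ≤ n)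
    (hc' : ∑ i ∈ Finset.Icc 1 n, c' i ≤ n)
    (h : ∑ i ∈ Finset.Icc 1 n, (c i : ℝ) * (i : ℝ) ^ (-α)
        = ∑ i ∈ Finset.Icc 1 n, (c' i : ℝ) * (i : ℝ) ^ (-α)) :
    ∀ i ∈ Finset.Icc 1 n, c i = c' i := by
  by_contra hne
  push_neg at hne
  obtain ⟨i₀, hi₀, hne₀⟩ := hne
  set S := (Finset.Icc 1 n).filter (fun i => c i ≠ c' i) with hS
  have hSne : S.Nonempty := ⟨i₀, Finset.mem_filter.mpr ⟨hi₀, hne₀⟩⟩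
  set i := S.min' hSne with hidef
  have hiS : i ∈ S := Finset.min'_mem S hSne
  obtain ⟨hiIcc, hine⟩ := Finset.mem_filter.mp hiS
  obtain ⟨hi1, hin⟩ := Finset.mem_Icc.mp hiIcc
  have hmin : ∀ k, 1 ≤ k → k < i → c k = c' k := by
    intro k hk1 hki
    by_contra hkne
    have hkn : k ≤ n := le_trans hki.le hin
    have hkS : k ∈ S := Finset.mem_filter.mpr ⟨Finset.mem_Icc.mpr ⟨hk1, hkn⟩, hkne⟩
    exact absurd (Finset.min'_le S k hkS) (not_le.mpr hki)
  rcases lt_or_gt_of_ne hine with hlt | hlt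
  · exact aux_lem n hn α hα c' c hc h.symm i hi1 hin (fun k h1 h2 => (hmin k h1 h2).symm) hlt
  · exact aux_lem n hn α hα c c' hc' h i hi1 hin hmin hlt
end

section
/- For positive integers n and l with 1 ≤ l ≤ n−1, if α > (log n)/(log n − log(n−1)) then l^(−α) > n·(l+1)^(−α). -/
/-- Key inequality: if `α > log n / (log n - log (n-1))` then
`l ^ (-α) > n * (l+1) ^ (-α)` for `1 ≤ l ≤ n - 1`. -/
theorem stmt_1 (n l : ℕ) (hl1 : 1 ≤ l) (hln : l ≤ n - 1) (hn : 2 ≤ n) (α : ℝ)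
    (hα : α > Real.log n / (Real.log n - Real.log (n - 1))) :
    (l : ℝ) ^ (-α) > (n : ℝ) * ((l : ℝ) + 1) ^ (-α) := by
  have hl1' : (1 : ℝ) ≤ (l : ℝ) := by exact_mod_cast hl1
  have hlpos : (0 : ℝ) < l := by linarith
  have hln' : l + 1 ≤ n := by omega
  have hln'' : (l : ℝ) + 1 ≤ n := by exact_mod_cast hln'
  have hn2 : (2 : ℝ) ≤ (n : ℝ) := by exact_mod_cast hn
  have hn1 : (1 : ℝ) ≤ (n : ℝ) - 1 := by linarith
  have hn1pos : (0 : ℝ) < (n : ℝ) - 1 := by linarith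
  -- D := log n - log (n-1) > 0
  have hD : 0 < Real.log n - Real.log ((n : ℝ) - 1) := by
    have := Real.log_lt_log hn1pos (by linarith : (n : ℝ) - 1 < n)
    linarith
  have hlogn : 0 < Real.log n := Real.log_pos (by linarith)
  have hαpos : 0 < α := lt_trans (div_pos hlogn hD) hα
  have hαD : Real.log n < α * (Real.log n - Real.log ((n : ℝ) - 1)) :=
    (div_lt_iff₀ hD).mp hα
  -- log(l+1) - log l ≥ log n - log (n-1)
  have hstep : Real.log n - Real.log ((n : ℝ) - 1)
      ≤ Real.log ((l : ℝ) + 1) - Real.log l := by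
    have hmul : (n : ℝ) * l ≤ ((l : ℝ) + 1) * ((n : ℝ) - 1) := by nlinarith
    have h1 : Real.log ((n : ℝ) * l) ≤ Real.log (((l : ℝ) + 1) * ((n : ℝ) - 1)) :=
      Real.log_le_log (by positivity) hmul
    rw [Real.log_mul (by positivity) (by positivity),
        Real.log_mul (by positivity) (by positivity)] at h1
    linarith
  have key : Real.log n < α * (Real.log ((l : ℝ) + 1) - Real.log l) := by
    calc Real.log n < α * (Real.log n - Real.log ((n : ℝ) - 1)) := hαD
    _ ≤ α * (Real.log ((l : ℝ) + 1) - Real.log l) := by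
        exact mul_le_mul_of_nonneg_left hstep hαpos.le
  -- exponentiate
  have hexp : (n : ℝ) < ((l : ℝ) + 1) ^ α * (l : ℝ) ^ (-α) := by
    have := Real.exp_lt_exp.mpr key
    rw [Real.exp_log (by linarith : (0:ℝ) < n)] at this
    calc (n : ℝ) < Real.exp (α * (Real.log ((l : ℝ) + 1) - Real.log l)) := this
    _ = ((l : ℝ) + 1) ^ α * (l : ℝ) ^ (-α) := by
        rw [mul_sub, Real.exp_sub, mul_comm α (Real.log ((l:ℝ)+1)),
          mul_comm α (Real.log (l:ℝ)),
          ← Real.rpow_def_of_pos (by linarith : (0:ℝ) < (l:ℝ)+1),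
          ← Real.rpow_def_of_pos hlpos, Real.rpow_neg hlpos.le,
          div_eq_mul_inv]
  have hpow : (0 : ℝ) < ((l : ℝ) + 1) ^ (-α) :=
    Real.rpow_pos_of_pos (by linarith) _
  have := mul_lt_mul_of_pos_right hexp hpow
  calc (n : ℝ) * ((l : ℝ) + 1) ^ (-α)
      < ((l : ℝ) + 1) ^ α * (l : ℝ) ^ (-α) * ((l : ℝ) + 1) ^ (-α) := this
    _ = (l : ℝ) ^ (-α) := by
        rw [mul_comm (((l : ℝ) + 1) ^ α), mul_assoc,
          ← Real.rpow_add (by linarith : (0:ℝ) < (l:ℝ)+1)]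
        simp
end

section
/- For integers n ≥ 2 and real α, if (n−1)^(−α) > n^(1−α), then for every l with 1 ≤ l ≤ n−1 one has l^(−α) > n·(l+1)^(−α). -/
/-- If `(n-1)^(-α) > n^(1-α)` then `l^(-α) > n·(l+1)^(-α)` for all `1 ≤ l ≤ n-1`. -/
theorem stmt_2 (n : ℕ) (hn : 2 ≤ n) (α : ℝ)
    (h : ((n : ℝ) - 1) ^ (-α) > (n : ℝ) ^ (1 - α)) :
    ∀ l : ℕ, 1 ≤ l → l ≤ n - 1 →
      (l : ℝ) ^ (-α) > (n : ℝ) * ((l : ℝ) + 1) ^ (-α) := by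
  have hN : (2 : ℝ) ≤ (n : ℝ) := by exact_mod_cast hn
  have hNpos : (0 : ℝ) < n := by linarith
  have hN1pos : (0 : ℝ) < (n : ℝ) - 1 := by linarith
  -- rewrite hypothesis
  have hsub : (1 : ℝ) - α = 1 + (-α) := by ring
  rw [hsub, Real.rpow_add hNpos, Real.rpow_one] at h
  have hNα : (0 : ℝ) < (n : ℝ) ^ α := Real.rpow_pos_of_pos hNpos α
  have hN1α : (0 : ℝ) < ((n : ℝ) - 1) ^ α := Real.rpow_pos_of_pos hN1pos α
  -- hypothesis in the form n * (n-1)^α < n^α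
  have hkey : (n : ℝ) * ((n : ℝ) - 1) ^ α < (n : ℝ) ^ α := by
    rw [Real.rpow_neg hNpos.le, Real.rpow_neg hN1pos.le, gt_iff_lt,
      ← div_eq_mul_inv, ← one_div, div_lt_div_iff₀ hNα hN1α] at h
    linarith
  -- α must be positive
  have hα : 0 < α := by
    by_contra hc
    push_neg at hc
    have : (n : ℝ) ^ α ≤ ((n : ℝ) - 1) ^ α :=
      Real.rpow_le_rpow_of_nonpos hN1pos (by linarith) hc
    nlinarith
  intro l hl hln
  have hL : (1 : ℝ) ≤ (l : ℝ) := by exact_mod_cast hl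
  have hLpos : (0 : ℝ) < l := by linarith
  have hLn : (l : ℝ) ≤ (n : ℝ) - 1 := by
    have : (l : ℝ) ≤ ((n - 1 : ℕ) : ℝ) := by exact_mod_cast hln
    rwa [Nat.cast_sub (by omega), Nat.cast_one] at this
  have hLα : (0 : ℝ) < (l : ℝ) ^ α := Real.rpow_pos_of_pos hLpos α
  have hL1α : (0 : ℝ) < ((l : ℝ) + 1) ^ α := Real.rpow_pos_of_pos (by linarith) α
  -- ratio comparison: (n/(n-1)) ≤ (l+1)/l
  have hratio : (n : ℝ) / ((n : ℝ) - 1) ≤ ((l : ℝ) + 1) / (l : ℝ) := by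
    rw [div_le_div_iff₀ hN1pos hLpos]
    nlinarith
  have hr1 : (0 : ℝ) < (n : ℝ) / ((n : ℝ) - 1) := by positivity
  have hpow : ((n : ℝ) / ((n : ℝ) - 1)) ^ α ≤ (((l : ℝ) + 1) / (l : ℝ)) ^ α :=
    Real.rpow_le_rpow hr1.le hratio hα.le
  rw [Real.div_rpow hNpos.le hN1pos.le] at hpow
  rw [Real.div_rpow (by linarith : (0:ℝ) ≤ (l:ℝ)+1) hLpos.le] at hpow
  have hmain : (n : ℝ) * (l : ℝ) ^ α < ((l : ℝ) + 1) ^ α := by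
    have h1 : (n : ℝ) < (n : ℝ) ^ α / ((n : ℝ) - 1) ^ α := by
      rw [lt_div_iff₀ hN1α]; linarith
    have h2 : (n : ℝ) < ((l : ℝ) + 1) ^ α / (l : ℝ) ^ α := lt_of_lt_of_le h1 hpow
    rw [lt_div_iff₀ hLα] at h2
    linarith
  rw [Real.rpow_neg hLpos.le, Real.rpow_neg (by linarith : (0:ℝ) ≤ (l:ℝ)+1)]
  rw [gt_iff_lt, ← div_eq_mul_inv, ← one_div, div_lt_div_iff₀ hL1α hLα]
  linarith
end

section
/- For integers m ≥ 3 and K ≥ 1, the number of (isomorphism classes of) rooted aggregation trees of depth K, in which every non-leaf node has exactly m children and node features lie in {0,1}, is at least (m−1)^(2^K − 1). -/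
/-- Full `m`-ary rooted trees of depth `K` with `Bool` node features. -/
inductive FTree (m : ℕ) : ℕ → Type
  | leaf : Bool → FTree m 0
  | node : ∀ {K : ℕ}, Bool → (Fin m → FTree m K) → FTree m (K + 1)

namespace FTree

variable {m : ℕ}

/-- The feature at the root. -/
def feat : ∀ {K : ℕ}, FTree m K → Bool
  | _, .leaf b => b
  | _, .node b _ => b

/-- Isomorphism of rooted feature-labeled trees (root-preserving, feature-preserving). -/
def Iso : ∀ {K : ℕ}, FTree m K → FTree m K → Prop
  | _, .leaf b, .leaf b' => b = b'
  | _, .node b f, .node b' f' =>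
      b = b' ∧ ∃ σ : Equiv.Perm (Fin m), ∀ i, Iso (f i) (f' (σ i))

/-- The aggregation-tree constraint, relative to the parent's feature `p`:
every non-leaf node must have its parent's feature among its children's features. -/
def ValidAux : ∀ {K : ℕ}, Bool → FTree m K → Prop
  | _, _, .leaf _ => True
  | _, p, .node b f => (∃ i, (f i).feat = p) ∧ ∀ i, ValidAux b (f i)

/-- A rooted aggregation tree: the constraint holds below the root. -/
def Valid : ∀ {K : ℕ}, FTree m K → Prop
  | _, .leaf _ => True
  | _, .node b f => ∀ i, ValidAux b (f i)

end FTree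

namespace Scratch

def Param (m : ℕ) : ℕ → Type
  | 0 => Unit
  | K+1 => Fin (m-1) × Param m K × Param m K

def paramFintype (m : ℕ) : ∀ K, Fintype (Param m K)
  | 0 => inferInstanceAs (Fintype Unit)
  | K+1 => letI := paramFintype m K
           inferInstanceAs (Fintype (Fin (m-1) × Param m K × Param m K))

lemma card_param (m : ℕ) : ∀ K, @Fintype.card (Param m K) (paramFintype m K) = (m-1)^(2^K - 1)
  | 0 => rfl
  | K+1 => by
    have ih := card_param m K
    have h1 : 1 ≤ 2^K := Nat.one_le_two_pow
    letI := paramFintype m K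
    show @Fintype.card (Fin (m-1) × Param m K × Param m K)
      (inferInstanceAs (Fintype (Fin (m-1) × Param m K × Param m K))) = _
    rw [Fintype.card_prod, Fintype.card_prod, Fintype.card_fin, ih, ← pow_add, ← pow_succ']
    congr 1
    have : 2^(K+1) = 2 * 2^K := by ring
    omega

def build (m : ℕ) : ∀ K, Bool → Param m K → FTree m K
  | 0, b, _ => .leaf b
  | K+1, b, p =>
      .node b (fun i => if i.val ≤ p.1.val then build m K true p.2.1 else build m K false p.2.2)

lemma feat_build (m : ℕ) : ∀ K (b : Bool) (p : Param m K), (build m K b p).feat = b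
  | 0, _, _ => rfl
  | _+1, _, _ => rfl

lemma feat_iso : ∀ {m K : ℕ} (t t' : FTree m K), t.Iso t' → t.feat = t'.feat
  | _, _, .leaf _, .leaf _, h => h
  | _, _, .node _ _, .node _ _, h => h.1

def childF (m K : ℕ) (c : Fin (m-1)) (pt pf : Param m K) : Fin m → FTree m K :=
  fun i => if i.val ≤ c.val then build m K true pt else build m K false pf

lemma build_succ (m K : ℕ) (b : Bool) (p : Param m (K+1)) :
    build m (K+1) b p = .node b (childF m K p.1 p.2.1 p.2.2) := rfl

lemma childF_pos {m K : ℕ} {c : Fin (m-1)} {pt pf : Param m K} {i : Fin m}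
    (h : i.val ≤ c.val) : childF m K c pt pf i = build m K true pt := if_pos h

lemma childF_neg {m K : ℕ} {c : Fin (m-1)} {pt pf : Param m K} {i : Fin m}
    (h : ¬ i.val ≤ c.val) : childF m K c pt pf i = build m K false pf := if_neg h

lemma iso_congr {m K : ℕ} {a b a' b' : FTree m K} (ha : a = a') (hb : b = b')
    (h : a.Iso b) : a'.Iso b' := ha ▸ hb ▸ h

lemma childF_feat {m K : ℕ} {c : Fin (m-1)} {pt pf : Param m K} (i : Fin m) :
    (childF m K c pt pf i).feat = decide (i.val ≤ c.val) := by
  unfold childF; split <;> simp [feat_build, *]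

lemma validAux_build (m : ℕ) : ∀ K (b q : Bool) (p : Param m K), FTree.ValidAux q (build m K b p)
  | 0, _, _, _ => trivial
  | K+1, b, q, p => by
    have hc := p.1.isLt
    show (∃ i, _) ∧ _
    constructor
    · cases q with
      | true =>
        refine ⟨⟨0, by omega⟩, ?_⟩
        show (if (0:ℕ) ≤ p.1.val then build m K true p.2.1 else build m K false p.2.2).feat = true
        rw [if_pos (Nat.zero_le _)]
        exact feat_build m K true p.2.1
      | false =>
        refine ⟨⟨m-1, by omega⟩, ?_⟩
        show (if m-1 ≤ p.1.val then build m K true p.2.1 else build m K false p.2.2).feat = false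
        rw [if_neg (by omega)]
        exact feat_build m K false p.2.2
    · intro i
      show FTree.ValidAux b (if i.val ≤ p.1.val then _ else _)
      split
      · exact validAux_build m K true b p.2.1
      · exact validAux_build m K false b p.2.2

lemma valid_build (m : ℕ) : ∀ K (b : Bool) (p : Param m K), (build m K b p).Valid
  | 0, _, _ => trivial
  | K+1, b, p => by
    intro i
    show FTree.ValidAux b (if i.val ≤ p.1.val then _ else _)
    split
    · exact validAux_build m K true b p.2.1
    · exact validAux_build m K false b p.2.2

lemma card_filter_le (m a : ℕ) (ha : a < m) :
    (Finset.univ.filter (fun i : Fin m => i.val ≤ a)).card = a + 1 := by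
  have : Finset.univ.filter (fun i : Fin m => i.val ≤ a) = Finset.Iic ⟨a, ha⟩ := by
    ext i; simp [Fin.le_def]
  rw [this, Fin.card_Iic]

lemma build_inj (m : ℕ) : ∀ K (b b' : Bool) (p p' : Param m K),
    (build m K b p).Iso (build m K b' p') → b = b' ∧ p = p'
  | 0, b, b', _, _, h => ⟨h, rfl⟩
  | K+1, b, b', p, p', h => by
    rw [build_succ, build_succ] at h
    obtain ⟨hb, σ, hσ⟩ := h
    have hc := p.1.isLt
    have hc' := p'.1.isLt
    have hfeat : ∀ i : Fin m, (i.val ≤ p.1.val ↔ (σ i).val ≤ p'.1.val) := by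
      intro i
      have h1 := feat_iso _ _ (hσ i)
      rw [childF_feat, childF_feat] at h1
      simpa using h1
    have hσ0 : (σ ⟨0, by omega⟩).val ≤ p'.1.val := (hfeat _).1 (Nat.zero_le _)
    have hpt : p.2.1 = p'.2.1 := by
      have h0 : (build m K true p.2.1).Iso (build m K true p'.2.1) :=
        iso_congr (childF_pos (Nat.zero_le _)) (childF_pos hσ0) (hσ ⟨0, by omega⟩)
      exact (build_inj m K true true _ _ h0).2
    have h1gt : ¬ ((⟨m-1, by omega⟩ : Fin m).val ≤ p.1.val) := by simp; omega
    have hσ1 : ¬ ((σ ⟨m-1, by omega⟩).val ≤ p'.1.val) := fun hle => h1gt ((hfeat _).2 hle)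
    have hpf : p.2.2 = p'.2.2 := by
      have h0 : (build m K false p.2.2).Iso (build m K false p'.2.2) :=
        iso_congr (childF_neg h1gt) (childF_neg hσ1) (hσ ⟨m-1, by omega⟩)
      exact (build_inj m K false false _ _ h0).2
    have hcard : (Finset.univ.filter (fun i : Fin m => i.val ≤ p.1.val)).card
        = (Finset.univ.filter (fun i : Fin m => i.val ≤ p'.1.val)).card := by
      apply Finset.card_bij (fun i _ => σ i)
      · intro i hi
        simp only [Finset.mem_filter, Finset.mem_univ, true_and] at hi ⊢
        exact (hfeat i).1 hi
      · intro i _ j _ hij; exact σ.injective hij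
      · intro j hj
        refine ⟨σ.symm j, ?_, by simp⟩
        simp only [Finset.mem_filter, Finset.mem_univ, true_and] at hj ⊢
        exact (hfeat (σ.symm j)).2 (by simpa using hj)
    rw [card_filter_le m p.1.val (by omega), card_filter_le m p'.1.val (by omega)] at hcard
    have hcc : p.1 = p'.1 := Fin.ext (by omega)
    exact ⟨hb, Prod.ext hcc (Prod.ext hpt hpf)⟩

end Scratch

/-- There are at least `(m-1)^(2^K - 1)` isomorphism classes of depth-`K` rooted
aggregation trees in which every non-leaf node has exactly `m` children and node
features lie in `{0,1}`. -/
theorem stmt_7 (m K : ℕ) (hm : 3 ≤ m) (hK : 1 ≤ K) :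
    ∃ T : Fin ((m - 1) ^ (2 ^ K - 1)) → FTree m K,
      (∀ a, (T a).Valid) ∧ ∀ a b, (T a).Iso (T b) → a = b := by
  letI := Scratch.paramFintype m K
  have hcard : Fintype.card (Scratch.Param m K) = (m - 1) ^ (2 ^ K - 1) :=
    Scratch.card_param m K
  let e : Fin ((m - 1) ^ (2 ^ K - 1)) ≃ Scratch.Param m K :=
    (Fintype.equivFinOfCardEq hcard).symm
  refine ⟨fun a => Scratch.build m K true (e a), fun a => Scratch.valid_build m K true (e a),
    fun a b h => ?_⟩
  have := (Scratch.build_inj m K true true (e a) (e b) h).2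
  exact e.injective this
end

section
/- Fix integers m ≥ 2 and K ≥ 2, and integers q_0, q_1, …, q_K such that 2^k − 2^(k−2) ≤ q_k ≤ m^k/2 for all 2 ≤ k ≤ K and 0 ≤ q_k ≤ m^k for k = 0,1. Then the number of isomorphism classes of full m-ary rooted trees of depth K with {0,1} node features, having exactly q_k nodes of feature 0 at depth k for each k, is at least 2^(2^(K−1) − 1). -/
namespace FTree

variable {m : ℕ}

/-- Number of nodes with feature `0` (i.e. `false`) at depth `k`. -/
def cnt0 : ∀ {K : ℕ}, FTree m K → ℕ → ℕ
  | _, .leaf b, 0 => if b then 0 else 1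
  | _, .leaf _, _ + 1 => 0
  | _, .node b _, 0 => if b then 0 else 1
  | _, .node _ f, k + 1 => ∑ i, cnt0 (f i) k

end FTree

namespace STMT9

/-- greedy clamp distribution -/
def grd (cap t i : ℕ) : ℕ := min cap (t - cap * i)

lemma grd_le (cap t i : ℕ) : grd cap t i ≤ cap := min_le_left _ _

lemma sumgrd (cap t : ℕ) : ∀ n, ∑ i ∈ Finset.range n, grd cap t i = min t (cap * n) := by
  intro n
  induction n with
  | zero => simp
  | succ n ih =>
    rw [Finset.sum_range_succ, ih]
    unfold grd
    have : cap * (n + 1) = cap * n + cap := by ring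
    omega

lemma grd_shift (cap t i s : ℕ) : grd cap t (i + s) = grd cap (t - cap * s) i := by
  unfold grd
  have : cap * (i + s) = cap * i + cap * s := by ring
  omega

lemma grd_cases (cap t i : ℕ) (h : 0 < cap) :
    grd cap t i = cap ∨ grd cap t i = t % cap ∨ grd cap t i = 0 := by
  have hd := Nat.div_add_mod t cap
  have hm := Nat.mod_lt t h
  rcases lt_trichotomy i (t / cap) with h' | h' | h'
  · left
    have h2 : cap * (i + 1) ≤ cap * (t / cap) := Nat.mul_le_mul_left cap h'
    have h3 : cap * (i + 1) = cap * i + cap := by ring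
    unfold grd; omega
  · subst h'
    unfold grd; omega
  · right; right
    have h2 : cap * (t / cap + 1) ≤ cap * i := Nat.mul_le_mul_left cap h'
    have h3 : cap * (t / cap + 1) = cap * (t / cap) + cap := by ring
    unfold grd; omega

lemma sum_fin_split {m : ℕ} (hm : 2 ≤ m) (g : ℕ → ℕ) :
    ∑ i : Fin m, g i.val = g 0 + g 1 + ∑ i ∈ Finset.range (m - 2), g (i + 2) := by
  obtain ⟨m', rfl⟩ : ∃ m', m = m' + 2 := ⟨m - 2, by omega⟩
  rw [Fin.sum_univ_eq_sum_range, Finset.sum_range_succ', Finset.sum_range_succ']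
  simp only [Nat.add_sub_cancel]
  ring

lemma cnt0_node_succ {m k : ℕ} (b : Bool) (f : Fin m → FTree m k) (j : ℕ) :
    (FTree.node b f).cnt0 (j + 1) = ∑ i, (f i).cnt0 j := rfl

lemma cnt0_node_zero {m k : ℕ} (b : Bool) (f : Fin m → FTree m k) :
    (FTree.node b f).cnt0 0 = if b then 0 else 1 := rfl

/-- canonical tree with given level profile -/
def mk (m : ℕ) : (e : ℕ) → (ℕ → ℕ) → FTree m e
  | 0, c => .leaf (decide (c 0 = 0))
  | e + 1, c => .node (decide (c 0 = 0)) (fun i => mk m e (fun k => grd (m ^ k) (c (k + 1)) i.val))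

lemma mk_succ (m e : ℕ) (c : ℕ → ℕ) : mk m (e + 1) c
    = .node (decide (c 0 = 0)) (fun i => mk m e (fun k => grd (m ^ k) (c (k + 1)) i.val)) := rfl

lemma mk_zero (m : ℕ) (c : ℕ → ℕ) : mk m 0 c = .leaf (decide (c 0 = 0)) := rfl

lemma cnt0_mk (m : ℕ) (hm : 2 ≤ m) : ∀ (e : ℕ) (c : ℕ → ℕ), (∀ k, k ≤ e → c k ≤ m ^ k) →
    ∀ k, k ≤ e → (mk m e c).cnt0 k = c k := by
  intro e
  induction e with
  | zero =>
    intro c hc k hk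
    interval_cases k
    have := hc 0 le_rfl
    simp only [pow_zero] at this
    rw [mk_zero]
    show (if decide (c 0 = 0) = true then 0 else 1) = c 0
    interval_cases h : c 0 <;> simp
  | succ e ih =>
    intro c hc k hk
    cases k with
    | zero =>
      have := hc 0 (by omega)
      simp only [pow_zero] at this
      rw [mk_succ]
      show (if decide (c 0 = 0) = true then 0 else 1) = c 0
      interval_cases h : c 0 <;> simp
    | succ k =>
      rw [mk_succ, cnt0_node_succ]
      have hk' : k ≤ e := by omega
      have : ∀ i : Fin m, (mk m e (fun k' => grd (m ^ k') (c (k' + 1)) i.val)).cnt0 k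
          = grd (m ^ k) (c (k + 1)) i.val := by
        intro i
        exact ih _ (fun k' _ => grd_le _ _ _) k hk'
      rw [Finset.sum_congr rfl (fun i _ => this i)]
      have h2 : ∑ i : Fin m, grd (m ^ k) (c (k + 1)) i.val
          = min (c (k+1)) (m ^ k * m) := by
        rw [Fin.sum_univ_eq_sum_range, sumgrd]
      rw [h2]
      have h3 : c (k+1) ≤ m ^ (k+1) := hc (k+1) hk
      have h4 : m ^ (k+1) = m ^ k * m := by ring
      omega

theorem iso_cnt0 {m : ℕ} : ∀ {e : ℕ} (T T' : FTree m e), T.Iso T' → ∀ k, T.cnt0 k = T'.cnt0 k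
  | _, .leaf b, .leaf b', h, k => by
      unfold FTree.Iso at h; subst h; rfl
  | _, .node b f, .node b' f', h, k => by
      obtain ⟨hb, σ, hσ⟩ := h
      cases k with
      | zero => subst hb; rfl
      | succ k =>
        show ∑ i, (f i).cnt0 k = ∑ i, (f' i).cnt0 k
        rw [← Equiv.sum_comp σ (fun j => (f' j).cnt0 k)]
        exact Finset.sum_congr rfl (fun i _ => iso_cnt0 (f i) (f' (σ i)) (hσ i) k)

/-- upper caps for intermediate levels -/
def Cc (m : ℕ) : ℕ → ℕ
  | 0 => 1
  | 1 => m
  | 2 => m ^ 2 / 2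
  | (k+3) => 2 * Cc m (k+2) + (m-2) * m ^ (k+2)

/-- upper caps for the bottom level -/
def Bb (m : ℕ) : ℕ → ℕ
  | 0 => 1
  | 1 => m
  | 2 => m ^ 2 / 2
  | (k+3) => 2 * Bb m (k+2) - 1 + (m-2) * m ^ (k+2)

lemma Cc_rec (m k : ℕ) (hk : 2 ≤ k) : Cc m (k+1) = 2 * Cc m k + (m-2) * m ^ k := by
  obtain ⟨j, rfl⟩ : ∃ j, k = j + 2 := ⟨k - 2, by omega⟩
  rfl

lemma Bb_rec (m k : ℕ) (hk : 2 ≤ k) : Bb m (k+1) = 2 * Bb m k - 1 + (m-2) * m ^ k := by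
  obtain ⟨j, rfl⟩ : ∃ j, k = j + 2 := ⟨k - 2, by omega⟩
  rfl

lemma pow_ge9 (m k : ℕ) (hm : 3 ≤ m) (hk : 2 ≤ k) : 9 ≤ m ^ k := by
  calc (9:ℕ) = 3 ^ 2 := by norm_num
  _ ≤ 3 ^ k := Nat.pow_le_pow_right (by norm_num) hk
  _ ≤ m ^ k := Nat.pow_le_pow_left hm k

lemma sub2_mul (m a : ℕ) (hm : 3 ≤ m) : (m - 2) * a + 2 * a = m * a ∧ a ≤ (m - 2) * a := by
  constructor
  · have := Nat.sub_mul m 2 a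
    have : 2 * a ≤ m * a := Nat.mul_le_mul_right a (by omega)
    omega
  · calc a = 1 * a := (one_mul a).symm
    _ ≤ (m - 2) * a := Nat.mul_le_mul_right a (by omega)

lemma lo_le_Cc (m : ℕ) (hm : 3 ≤ m) : ∀ k, 2 ≤ k → 3 * 2 ^ (k - 2) ≤ Cc m k := by
  intro k hk
  induction k, hk using Nat.le_induction with
  | base =>
    show 3 * 2 ^ 0 ≤ m ^ 2 / 2
    have := pow_ge9 m 2 hm le_rfl
    simp only [pow_zero]; omega
  | succ k hk ih =>
    rw [Cc_rec m k hk]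
    have h1 : k + 1 - 2 = (k - 2) + 1 := by omega
    rw [h1, pow_succ]
    omega

lemma half_le_Cc (m : ℕ) (hm : 3 ≤ m) : ∀ k, 2 ≤ k → m ^ k / 2 ≤ Cc m k := by
  intro k hk
  induction k, hk using Nat.le_induction with
  | base => exact le_rfl
  | succ k hk ih =>
    rw [Cc_rec m k hk]
    have h1 : m ^ (k+1) = m * m ^ k := by ring
    have h2 := (sub2_mul m (m ^ k) hm).1
    have h3 := (sub2_mul m (m ^ k) hm).2
    have h4 := pow_ge9 m k hm hk
    omega

lemma half_le_Bb (m : ℕ) (hm : 3 ≤ m) : ∀ k, 2 ≤ k → m ^ k / 2 ≤ Bb m k := by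
  intro k hk
  induction k, hk using Nat.le_induction with
  | base => exact le_rfl
  | succ k hk ih =>
    rw [Bb_rec m k hk]
    have h1 : m ^ (k+1) = m * m ^ k := by ring
    have h2 := (sub2_mul m (m ^ k) hm).1
    have h3 := (sub2_mul m (m ^ k) hm).2
    have h4 := pow_ge9 m k hm hk
    omega

lemma nu_lt_Bb (m : ℕ) (hm : 3 ≤ m) : ∀ k, 2 ≤ k → 3 * 2 ^ (k - 2) - 1 < Bb m k := by
  intro k hk
  induction k, hk using Nat.le_induction with
  | base =>
    show 3 * 2 ^ 0 - 1 < m ^ 2 / 2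
    have := pow_ge9 m 2 hm le_rfl
    simp only [pow_zero]; omega
  | succ k hk ih =>
    rw [Bb_rec m k hk]
    have h1 : k + 1 - 2 = (k - 2) + 1 := by omega
    rw [h1, pow_succ]
    have h3 := (sub2_mul m (m ^ k) hm).2
    have h4 := pow_ge9 m k hm hk
    omega

/-- admissible profiles for depth-`e` coding subtrees -/
def Adm (m e : ℕ) (p : ℕ → ℕ) : Prop :=
  p 0 ≤ 1 ∧ p 1 ≤ m ∧
  (∀ k, 2 ≤ k → k < e → 3 * 2 ^ (k - 2) ≤ p k ∧ p k ≤ Cc m k) ∧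
  (3 * 2 ^ (e - 2) - 1 ≤ p e ∧ p e ≤ Bb m e)

/-- level-1 distinguishing design -/
lemma lvl1 (m Q : ℕ) (hm : 3 ≤ m) (h3 : 3 ≤ Q) (hQ : 2 * Q ≤ m ^ 2) :
    ∃ A t', 2 ≤ A ∧ A ≤ m ∧
      (∀ i, grd m t' i ≠ A ∧ grd m t' i ≠ 1) ∧
      A + 1 + t' = Q ∧ t' ≤ (m - 2) * m := by
  have hmm : m ^ 2 = m * m := by ring
  set t := Q - 3 with ht
  have htm : 2 * t + 6 ≤ m * m := by omega
  have hsub := sub2_mul m m hm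
  have ht_le : t ≤ (m - 2) * m := by
    rcases Nat.lt_or_ge m 4 with h4 | h4
    · have : m = 3 := by omega
      subst this; omega
    · have : 4 * m ≤ m * m := Nat.mul_le_mul_right m h4
      omega
  have hrm : t % m < m := Nat.mod_lt t (by omega)
  have hrt : t % m ≤ t := Nat.mod_le t m
  by_cases hr12 : t % m = 1 ∨ t % m = 2
  · have ht' : t - t % m = m * (t / m) := by
      have := Nat.div_add_mod t m; omega
    have hmod : (t - t % m) % m = 0 := by rw [ht']; exact Nat.mul_mod_right m _
    have key : (2 + t % m ≤ m) ∧ (2 + t % m = m → t - t % m = 0) := by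
      rcases Nat.lt_or_ge m 5 with h5 | h5
      · have : m = 3 ∨ m = 4 := by omega
        rcases this with rfl | rfl
        · have h9 : t ≤ 1 := by omega
          omega
        · have h16 : t ≤ 5 := by omega
          omega
      · omega
    refine ⟨2 + t % m, t - t % m, by omega, key.1, ?_, by omega, by omega⟩
    intro i
    have hgle : grd m (t - t % m) i ≤ t - t % m :=
      le_trans (min_le_right _ _) (Nat.sub_le _ _)
    rcases grd_cases m (t - t % m) i (by omega) with h | h | h <;> omega
  · refine ⟨2, t, le_rfl, by omega, ?_, by omega, ht_le⟩
    intro i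
    rcases grd_cases m t i (by omega) with h | h | h <;> omega

/-- bottom level design -/
lemma bottom_design (m e P : ℕ) (hm : 3 ≤ m) (he : 2 ≤ e)
    (hlo : 3 * 2 ^ (e + 1 - 2) - 1 ≤ P) (hhi : P ≤ Bb m (e+1)) :
    ∃ x y tb, 3 * 2 ^ (e - 2) - 1 ≤ x ∧ x + 1 ≤ Bb m e ∧
      3 * 2 ^ (e - 2) - 1 ≤ y ∧ y + 1 ≤ Bb m e ∧
      x + y + 1 + tb = P ∧ tb ≤ (m - 2) * m ^ e := by
  have hrec := Bb_rec m e he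
  have hnu := nu_lt_Bb m hm e he
  have h1 : e + 1 - 2 = (e - 2) + 1 := by omega
  rw [h1, pow_succ] at hlo
  set ν := 3 * 2 ^ (e - 2) - 1 with hν
  have hν1 : 0 < 3 * 2 ^ (e - 2) := by positivity
  set R := (m - 2) * m ^ e with hR
  set S := max (2 * ν + 1) (P - R) with hS
  refine ⟨min (Bb m e - 1) (S - 1 - ν), S - 1 - min (Bb m e - 1) (S - 1 - ν), P - S,
    by omega, by omega, by omega, by omega, by omega, by omega⟩

/-- intermediate level design -/
lemma mid_design (m k pk1 : ℕ) (hm : 3 ≤ m) (hk : 2 ≤ k)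
    (hlo : 3 * 2 ^ (k + 1 - 2) ≤ pk1) (hhi : pk1 ≤ Cc m (k+1)) :
    ∃ x tm, 3 * 2 ^ (k - 2) ≤ x ∧ x ≤ Cc m k ∧ 2 * x + tm = pk1 ∧ tm ≤ (m - 2) * m ^ k := by
  have hrec := Cc_rec m k hk
  have hlc := lo_le_Cc m hm k hk
  have h1 : k + 1 - 2 = (k - 2) + 1 := by omega
  rw [h1, pow_succ] at hlo
  have hR : 0 < (m - 2) * m ^ k := Nat.mul_pos (by omega) (pow_pos (by omega) k)
  refine ⟨max (3 * 2 ^ (k - 2)) ((pk1 - (m - 2) * m ^ k + 1) / 2),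
    pk1 - 2 * max (3 * 2 ^ (k - 2)) ((pk1 - (m - 2) * m ^ k + 1) / 2),
    le_max_left _ _, by omega, by omega, by omega⟩



lemma split_design (m e : ℕ) (p : ℕ → ℕ) (hm : 3 ≤ m) (he : 2 ≤ e) (hp : Adm m (e+1) p) :
    ∃ (π0 π1 : Bool → ℕ → ℕ) (φ : ℕ → ℕ → ℕ),
      (∀ b, Adm m e (π0 b)) ∧ (∀ b, Adm m e (π1 b)) ∧
      (∀ i k, k ≤ e → φ i k ≤ m ^ k) ∧
      (∀ b k, k ≤ e → π0 b k + π1 b k + ∑ i ∈ Finset.range (m - 2), φ i k = p (k+1)) ∧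
      (∀ b b', π0 b e = π0 b' e → b = b') ∧
      (∀ b i, π0 b 1 ≠ φ i 1) ∧ (∀ b i, π1 b 1 ≠ φ i 1) ∧ (∀ b b', π0 b 1 ≠ π1 b' 1) := by
  obtain ⟨hp0, hp1, hpmid, hpbot⟩ := hp
  have hQ2 := hpmid 2 le_rfl (by omega)
  have hCc2 : Cc m 2 = m ^ 2 / 2 := rfl
  obtain ⟨A, t', hA2, hAm, hgrdA, hsum1, ht'⟩ :=
    lvl1 m (p 2) hm (by simpa using hQ2.1) (by omega)
  obtain ⟨x, y, tb, hx1, hx2, hy1, hy2, hsumE, htb⟩ :=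
    bottom_design m e (p (e+1)) hm he hpbot.1 hpbot.2
  have hmid : ∀ k, ∃ xk tk, 2 ≤ k → k < e →
      3 * 2 ^ (k - 2) ≤ xk ∧ xk ≤ Cc m k ∧ 2 * xk + tk = p (k+1) ∧ tk ≤ (m - 2) * m ^ k := by
    intro k
    by_cases h : 2 ≤ k ∧ k < e
    · obtain ⟨xk, tk, h1, h2, h3, h4⟩ := mid_design m k (p (k+1)) hm h.1
        (hpmid (k+1) (by omega) (by omega)).1 (hpmid (k+1) (by omega) (by omega)).2
      exact ⟨xk, tk, fun _ _ => ⟨h1, h2, h3, h4⟩⟩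
    · exact ⟨0, 0, fun h1 h2 => absurd ⟨h1, h2⟩ h⟩
  choose xm tm hxm using hmid
  have he0 : e ≠ 0 := by omega
  have he1 : e ≠ 1 := by omega
  refine ⟨fun b k => if k = 0 then grd 1 (p 1) 0 else if k = 1 then A
            else if k = e then x + (cond b 1 0) else xm k,
          fun b k => if k = 0 then grd 1 (p 1) 1 else if k = 1 then 1
            else if k = e then y + (cond b 0 1) else xm k,
          fun i k => if k = 0 then grd 1 (p 1) (i + 2) else if k = 1 then grd m t' i
            else if k = e then grd (m ^ e) tb i else grd (m ^ k) (tm k) i,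
          ?_, ?_, ?_, ?_, ?_, ?_, ?_, ?_⟩
  · intro b
    refine ⟨by simpa using grd_le 1 (p 1) 0, by simp [he1.symm]; omega, ?_, ?_⟩
    · intro k hk2 hke
      have hk0 : k ≠ 0 := by omega
      have hk1 : k ≠ 1 := by omega
      have hkee : k ≠ e := by omega
      simp only [if_neg hk0, if_neg hk1, if_neg hkee]
      exact ⟨(hxm k hk2 hke).1, (hxm k hk2 hke).2.1⟩
    · simp only [if_neg he0, if_neg he1, eq_self_iff_true, if_true]
      cases b <;> simp <;> omega
  · intro b
    refine ⟨by simpa using grd_le 1 (p 1) 1, by simp [he1.symm]; omega, ?_, ?_⟩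
    · intro k hk2 hke
      have hk0 : k ≠ 0 := by omega
      have hk1 : k ≠ 1 := by omega
      have hkee : k ≠ e := by omega
      simp only [if_neg hk0, if_neg hk1, if_neg hkee]
      exact ⟨(hxm k hk2 hke).1, (hxm k hk2 hke).2.1⟩
    · simp only [if_neg he0, if_neg he1, eq_self_iff_true, if_true]
      cases b <;> simp <;> omega
  · intro i k hk
    by_cases hk0 : k = 0
    · subst hk0; simpa using grd_le 1 (p 1) (i + 2)
    by_cases hk1 : k = 1
    · subst hk1; simpa using grd_le m t' i
    by_cases hke : k = e
    · rw [hke]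
      simp only [if_neg he0, if_neg he1, eq_self_iff_true, if_true]
      exact grd_le _ _ _
    · simp only [if_neg hk0, if_neg hk1, if_neg hke]
      exact grd_le _ _ _
  · intro b k hk
    by_cases hk0 : k = 0
    · subst hk0
      simp only [reduceIte]
      have hsh : ∀ i, grd 1 (p 1) (i + 2) = grd 1 (p 1 - 2) i := by
        intro i
        have := grd_shift 1 (p 1) i 2
        simpa using this
      rw [Finset.sum_congr rfl (fun i _ => hsh i), sumgrd]
      have g0 : grd 1 (p 1) 0 = min 1 (p 1) := by simp [grd]
      have g1 : grd 1 (p 1) 1 = min 1 (p 1 - 1) := by simp [grd]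
      rw [g0, g1]
      have hp01 : p (0 + 1) = p 1 := rfl
      rw [hp01]
      omega
    by_cases hk1 : k = 1
    · subst hk1
      norm_num
      rw [sumgrd]
      have hc : m * (m - 2) = (m - 2) * m := by ring
      omega
    by_cases hke : k = e
    · rw [hke]
      simp only [if_neg he0, if_neg he1, eq_self_iff_true, if_true]
      rw [sumgrd]
      have hc : m ^ e * (m - 2) = (m - 2) * m ^ e := by ring
      cases b <;> simp only [Bool.cond_true, Bool.cond_false] <;> omega
    · have hk2 : 2 ≤ k := by omega
      have hke' : k < e := by omega
      simp only [if_neg hk0, if_neg hk1, if_neg hke]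
      rw [sumgrd]
      have hc : m ^ k * (m - 2) = (m - 2) * m ^ k := by ring
      have h4 := hxm k hk2 hke'
      omega
  · intro b b'
    simp only [if_neg he0, if_neg he1, eq_self_iff_true, if_true]
    cases b <;> cases b' <;> simp <;> omega
  · intro b i
    have h := (hgrdA i).1
    simp only [he1]
    simp
    exact fun h2 => h h2.symm
  · intro b i
    have h := (hgrdA i).2
    simp only [he1]
    simp
    exact fun h2 => h h2.symm
  · intro b b'
    simp
    omega

lemma base_family (m : ℕ) (p : ℕ → ℕ) (hm : 3 ≤ m) (hadm : Adm m 2 p) :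
    ∃ E : Bool → FTree m 2,
      (∀ b k, k ≤ 2 → (E b).cnt0 k = p k) ∧ (∀ b b', (E b).Iso (E b') → b = b') := by
  obtain ⟨hp0, hp1, _, hbot⟩ := hadm
  have hB2 : Bb m 2 = m ^ 2 / 2 := rfl
  have hmm : m ^ 2 = m * m := by ring
  have hp2u : 2 * p 2 ≤ m * m := by omega
  have hp2l : 2 ≤ p 2 := by simpa using hbot.1
  set t := p 2 - 2 with htdef
  have hsubm := sub2_mul m m hm
  have ht2 : t ≤ (m - 2) * m := by
    rcases Nat.lt_or_ge m 4 with h4 | h4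
    · have : m = 3 := by omega
      subst this; omega
    · have : 4 * m ≤ m * m := Nat.mul_le_mul_right m h4
      omega
  set vB : Bool → ℕ → ℕ := fun b n =>
    if b then (if n = 0 then 2 else grd m t (n - 1))
    else (if n ≤ 1 then 1 else grd m t (n - 2)) with hvB
  have hvBle : ∀ b n, vB b n ≤ m := by
    intro b n
    rcases b <;> simp only [hvB, if_true, if_false, Bool.false_eq_true] <;> split
    · omega
    · exact grd_le _ _ _
    · omega
    · exact grd_le _ _ _
  set prof : Bool → ℕ → ℕ → ℕ := fun b n k => if k = 0 then grd 1 (p 1) n else vB b n with hprof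
  have hfeas : ∀ b n k, k ≤ 1 → prof b n k ≤ m ^ k := by
    intro b n k hk
    interval_cases k
    · simpa [hprof] using grd_le 1 (p 1) n
    · simpa [hprof] using hvBle b n
  refine ⟨fun b => .node (decide (p 0 = 0)) (fun i => mk m 1 (prof b i.val)), ?_, ?_⟩
  · intro b k hk
    have hcm : ∀ b' (n : ℕ), ∀ k' ≤ 1, (mk m 1 (prof b' n)).cnt0 k' = prof b' n k' :=
      fun b' n => cnt0_mk m (by omega) 1 (prof b' n) (hfeas b' n)
    interval_cases k
    · show (if decide (p 0 = 0) = true then 0 else 1) = p 0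
      interval_cases h : p 0 <;> simp
    · rw [cnt0_node_succ]
      have : ∀ i : Fin m, (mk m 1 (prof b i.val)).cnt0 0 = grd 1 (p 1) i.val := by
        intro i
        rw [hcm b i.val 0 (by omega)]
        rfl
      rw [Finset.sum_congr rfl (fun i _ => this i), Fin.sum_univ_eq_sum_range, sumgrd]
      omega
    · rw [cnt0_node_succ]
      have : ∀ i : Fin m, (mk m 1 (prof b i.val)).cnt0 1 = vB b i.val := by
        intro i
        rw [hcm b i.val 1 (by omega)]
        simp [hprof]
      rw [Finset.sum_congr rfl (fun i _ => this i), sum_fin_split (by omega)]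
      rcases b with _ | _
    -- false case
      · have hs : ∀ i ∈ Finset.range (m - 2), vB false (i + 2) = grd m t i := by
          intro i _
          simp only [hvB, if_false, Bool.false_eq_true]
          have : ¬ (i + 2 ≤ 1) := by omega
          rw [if_neg this]
          norm_num
        rw [Finset.sum_congr rfl hs, sumgrd]
        have hv0 : vB false 0 = 1 := by norm_num [hvB]
        have hv1 : vB false 1 = 1 := by norm_num [hvB]
        rw [hv0, hv1]
        have hc : m * (m - 2) = (m - 2) * m := by ring
        omega
    -- true case
      · have hs : ∀ i ∈ Finset.range (m - 2), vB true (i + 2) = grd m (t - m) i := by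
          intro i _
          simp only [hvB, if_true]
          have : ¬ (i + 2 = 0) := by omega
          rw [if_neg this]
          have h2 : i + 2 - 1 = i + 1 := by omega
          rw [h2]
          have := grd_shift m t i 1
          simpa using this
        rw [Finset.sum_congr rfl hs, sumgrd]
        have hv0 : vB true 0 = 2 := by norm_num [hvB]
        have hv1 : vB true 1 = grd m t 0 := by norm_num [hvB]
        rw [hv0, hv1]
        have hg0 : grd m t 0 = min m t := by simp [grd]
        rw [hg0]
        have hc : m * (m - 2) = (m - 2) * m := by ring
        omega
  · intro b b' hiso
    obtain ⟨-, σ, hσ⟩ := hiso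
    have hv : ∀ i : Fin m, vB b i.val = vB b' (σ i).val := by
      intro i
      have h1 := iso_cnt0 _ _ (hσ i) 1
      rw [cnt0_mk m (by omega) 1 _ (hfeas b i.val) 1 le_rfl,
          cnt0_mk m (by omega) 1 _ (hfeas b' (σ i).val) 1 le_rfl] at h1
      simpa [hprof] using h1
    by_contra hne
    set χ : ℕ → ℕ := fun v => if 2 ≤ v then 1 else 0 with hχ
    have hsume : ∑ i : Fin m, χ (vB b i.val) = ∑ i : Fin m, χ (vB b' i.val) := by
      rw [Finset.sum_congr rfl (fun i _ => by rw [hv i])]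
      exact Equiv.sum_comp σ (fun j => χ (vB b' j.val))
    have hlast : grd m t (m - 2) = 0 := by
      have h1 : m * (m - 2) = (m - 2) * m := by ring
      have : t - m * (m - 2) = 0 := by omega
      unfold grd
      omega
    have hcomp : ∀ c : Bool, ∑ i : Fin m, χ (vB c i.val)
        = (if c then 1 else 0) + ∑ i ∈ Finset.range (m - 1), χ (grd m t i) := by
      intro c
      rw [sum_fin_split (by omega) (fun n => χ (vB c n))]
      rcases c with _ | _
      · have hs : ∀ i ∈ Finset.range (m - 2), χ (vB false (i + 2)) = χ (grd m t (i + 2 - 2)) := by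
          intro i _
          have : ¬ (i + 2 ≤ 1) := by omega
          simp only [hvB, Bool.false_eq_true, if_false, if_neg this]
        rw [Finset.sum_congr rfl hs]
        have h1 : ∑ i ∈ Finset.range (m - 1), χ (grd m t i)
            = ∑ i ∈ Finset.range (m - 2), χ (grd m t i) + χ (grd m t (m - 2)) := by
          have h2 : m - 1 = (m - 2) + 1 := by omega
          rw [h2, Finset.sum_range_succ]
        have hv0 : vB false 0 = 1 := by norm_num [hvB]
        have hv1 : vB false 1 = 1 := by norm_num [hvB]
        rw [h1, hv0, hv1, hlast]
        have hs2 : ∀ i ∈ Finset.range (m - 2), χ (grd m t (i + 2 - 2)) = χ (grd m t i) := by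
          intro i _
          norm_num
        rw [Finset.sum_congr rfl hs2]
        have hχ1 : χ 1 = 0 := rfl
        have hχ0 : χ 0 = 0 := rfl
        simp only [Bool.false_eq_true, if_false]
        omega
      · have hs : ∀ i ∈ Finset.range (m - 2), χ (vB true (i + 2)) = χ (grd m t (i + 1)) := by
          intro i _
          have h0 : ¬ (i + 2 = 0) := by omega
          have h2 : i + 2 - 1 = i + 1 := by omega
          simp only [hvB, if_true, if_neg h0, h2]
        rw [Finset.sum_congr rfl hs]
        have h1 : ∑ i ∈ Finset.range (m - 1), χ (grd m t i)
            = ∑ i ∈ Finset.range (m - 2), χ (grd m t (i + 1)) + χ (grd m t 0) := by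
          have h2 : m - 1 = (m - 2) + 1 := by omega
          rw [h2, Finset.sum_range_succ']
        have hv0 : vB true 0 = 2 := by norm_num [hvB]
        have hv1 : vB true 1 = grd m t 0 := by norm_num [hvB]
        rw [h1, hv0, hv1]
        have hχ2 : χ 2 = 1 := rfl
        simp only [if_true]
        omega
    rw [hcomp b, hcomp b'] at hsume
    rcases b <;> rcases b'
    · exact hne rfl
    · norm_num at hsume
    · norm_num at hsume
    · exact hne rfl

lemma step_family (m e n' : ℕ) (hm : 3 ≤ m) (he : 2 ≤ e) (p : ℕ → ℕ)
    (π0 π1 : Bool → ℕ → ℕ) (φ : ℕ → ℕ → ℕ)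
    (hp0 : p 0 ≤ 1)
    (hφ : ∀ i k, k ≤ e → φ i k ≤ m ^ k)
    (hsums : ∀ b k, k ≤ e → π0 b k + π1 b k + ∑ i ∈ Finset.range (m - 2), φ i k = p (k + 1))
    (hbit : ∀ b b', π0 b e = π0 b' e → b = b')
    (hd0 : ∀ b i, π0 b 1 ≠ φ i 1) (hd1 : ∀ b i, π1 b 1 ≠ φ i 1)
    (hd01 : ∀ b b', π0 b 1 ≠ π1 b' 1)
    (E0 E1 : Bool → Fin n' → FTree m e)
    (hE0c : ∀ b s k, k ≤ e → (E0 b s).cnt0 k = π0 b k)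
    (hE1c : ∀ b s k, k ≤ e → (E1 b s).cnt0 k = π1 b k)
    (hE0i : ∀ b s s', (E0 b s).Iso (E0 b s') → s = s')
    (hE1i : ∀ b s s', (E1 b s).Iso (E1 b s') → s = s') :
    ∃ T : Bool × Fin n' × Fin n' → FTree m (e + 1),
      (∀ x k, k ≤ e + 1 → (T x).cnt0 k = p k) ∧ (∀ x x', (T x).Iso (T x') → x = x') := by
  have hm0 : (0:ℕ) < m := by omega
  have hm1 : (1:ℕ) < m := by omega
  refine ⟨fun x => .node (decide (p 0 = 0)) (fun i =>
      if (i : ℕ) = 0 then E0 x.1 x.2.1 else if (i : ℕ) = 1 then E1 x.1 x.2.2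
      else mk m e (φ ((i : ℕ) - 2))), ?_, ?_⟩
  · rintro ⟨b, s₁, s₂⟩ k hk
    cases k with
    | zero =>
      show (if decide (p 0 = 0) = true then 0 else 1) = p 0
      interval_cases h : p 0 <;> simp
    | succ k =>
      have hk' : k ≤ e := by omega
      show (∑ i : Fin m, ((fun (j : ℕ) => if j = 0 then E0 b s₁ else if j = 1 then E1 b s₂
          else mk m e (φ (j - 2))) i.val).cnt0 k) = p (k + 1)
      rw [sum_fin_split (by omega) (fun j => ((fun (j : ℕ) => if j = 0 then E0 b s₁
          else if j = 1 then E1 b s₂ else mk m e (φ (j - 2))) j).cnt0 k)]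
      beta_reduce
      have hg0 : ((if (0:ℕ) = 0 then E0 b s₁ else if (0:ℕ) = 1 then E1 b s₂
          else mk m e (φ (0 - 2)))).cnt0 k = π0 b k := by
        rw [if_pos rfl]
        exact hE0c b s₁ k hk'
      have hg1 : ((if (1:ℕ) = 0 then E0 b s₁ else if (1:ℕ) = 1 then E1 b s₂
          else mk m e (φ (1 - 2)))).cnt0 k = π1 b k := by
        rw [if_neg (by omega), if_pos rfl]
        exact hE1c b s₂ k hk'
      have hg2 : ∀ i ∈ Finset.range (m - 2), ((if (i + 2 : ℕ) = 0 then E0 b s₁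
          else if (i + 2 : ℕ) = 1 then E1 b s₂ else mk m e (φ (i + 2 - 2)))).cnt0 k = φ i k := by
        intro i _
        rw [if_neg (by omega), if_neg (by omega)]
        have h2 : i + 2 - 2 = i := by omega
        rw [h2]
        exact cnt0_mk m (by omega) e (φ i) (fun k' hk'' => hφ i k' hk'') k hk'
      rw [hg0, hg1, Finset.sum_congr rfl hg2]
      exact hsums b k hk'
  · rintro ⟨b, s₁, s₂⟩ ⟨b', s₁', s₂'⟩ hiso
    obtain ⟨-, σ, hσ⟩ := hiso
    simp only [] at hσ
    have hred : ∀ (c : Bool) (u v : Fin n') (j : ℕ), j ≠ 0 → j ≠ 1 →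
        (if j = 0 then E0 c u else if j = 1 then E1 c v else mk m e (φ (j - 2)))
          = mk m e (φ (j - 2)) := by
      intro c u v j h0 h1
      rw [if_neg h0, if_neg h1]
    have hred0 : ∀ (c : Bool) (u v : Fin n'),
        (if (0:ℕ) = 0 then E0 c u else if (0:ℕ) = 1 then E1 c v else mk m e (φ (0 - 2)))
          = E0 c u := fun c u v => if_pos rfl
    have hred1 : ∀ (c : Bool) (u v : Fin n'),
        (if (1:ℕ) = 0 then E0 c u else if (1:ℕ) = 1 then E1 c v else mk m e (φ (1 - 2)))
          = E1 c v := fun c u v => by rw [if_neg (by omega), if_pos rfl]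
    have hmkc : ∀ (j : ℕ), ∀ k ≤ e, (mk m e (φ j)).cnt0 k = φ j k :=
      fun j => cnt0_mk m (by omega) e (φ j) (fun k' hk'' => hφ j k' hk'')
    have hj0 : ((σ ⟨0, hm0⟩ : Fin m) : ℕ) = 0 ∧ b = b' := by
      have hiso0 := hσ ⟨0, hm0⟩
      rw [hred0] at hiso0
      by_cases h0 : ((σ ⟨0, hm0⟩ : Fin m) : ℕ) = 0
      · rw [h0, hred0] at hiso0
        have hcnte := iso_cnt0 _ _ hiso0 e
        rw [hE0c b s₁ e le_rfl, hE0c b' s₁' e le_rfl] at hcnte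
        exact ⟨h0, hbit b b' hcnte⟩
      by_cases h1 : ((σ ⟨0, hm0⟩ : Fin m) : ℕ) = 1
      · exfalso
        rw [h1, hred1] at hiso0
        have hcnt1 := iso_cnt0 _ _ hiso0 1
        rw [hE0c b s₁ 1 (by omega), hE1c b' s₂' 1 (by omega)] at hcnt1
        exact hd01 b b' hcnt1
      · exfalso
        rw [hred b' s₁' s₂' _ h0 h1] at hiso0
        have hcnt1 := iso_cnt0 _ _ hiso0 1
        rw [hE0c b s₁ 1 (by omega), hmkc _ 1 (by omega)] at hcnt1
        exact hd0 b _ hcnt1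
    obtain ⟨hj0v, hbb⟩ := hj0
    subst hbb
    have hs1 : s₁ = s₁' := by
      have hiso0 := hσ ⟨0, hm0⟩
      rw [hred0, hj0v, hred0] at hiso0
      exact hE0i b s₁ s₁' hiso0
    have hj1 : ((σ ⟨1, hm1⟩ : Fin m) : ℕ) = 1 := by
      have hiso1 := hσ ⟨1, hm1⟩
      rw [hred1] at hiso1
      by_cases h0 : ((σ ⟨1, hm1⟩ : Fin m) : ℕ) = 0
      · exfalso
        rw [h0, hred0] at hiso1
        have hcnt1 := iso_cnt0 _ _ hiso1 1
        rw [hE1c b s₂ 1 (by omega), hE0c b s₁' 1 (by omega)] at hcnt1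
        exact hd01 b b hcnt1.symm
      by_cases h1 : ((σ ⟨1, hm1⟩ : Fin m) : ℕ) = 1
      · exact h1
      · exfalso
        rw [hred b s₁' s₂' _ h0 h1] at hiso1
        have hcnt1 := iso_cnt0 _ _ hiso1 1
        rw [hE1c b s₂ 1 (by omega), hmkc _ 1 (by omega)] at hcnt1
        exact hd1 b _ hcnt1
    have hs2 : s₂ = s₂' := by
      have hiso1 := hσ ⟨1, hm1⟩
      rw [hred1, hj1, hred1] at hiso1
      exact hE1i b s₂ s₂' hiso1
    rw [hs1, hs2]

lemma families (m : ℕ) (hm : 3 ≤ m) : ∀ e, 2 ≤ e → ∀ p : ℕ → ℕ, Adm m e p →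
    ∃ E : Fin (2 ^ (2 ^ (e - 1) - 1)) → FTree m e,
      (∀ s k, k ≤ e → (E s).cnt0 k = p k) ∧ (∀ s s', (E s).Iso (E s') → s = s') := by
  intro e he
  induction e, he using Nat.le_induction with
  | base =>
    intro p hadm
    obtain ⟨E, hc, hi⟩ := base_family m p hm hadm
    refine ⟨fun a => E (decide (a.val = 1)), fun a k hk => hc _ k hk, ?_⟩
    intro s s' hiso
    have h1 := hi _ _ hiso
    have hs : (s : ℕ) < 2 := by have := s.isLt; norm_num at this; omega
    have hs' : (s' : ℕ) < 2 := by have := s'.isLt; norm_num at this; omega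
    apply Fin.ext
    rcases (by omega : (s : ℕ) = 0 ∨ (s : ℕ) = 1) with h | h <;>
      rcases (by omega : (s' : ℕ) = 0 ∨ (s' : ℕ) = 1) with h' | h' <;>
      simp [h, h'] at h1 ⊢
  | succ e he ih =>
    intro p hadm
    obtain ⟨π0, π1, φ, hadm0, hadm1, hφ, hsums, hbit, hd0, hd1, hd01⟩ :=
      split_design m e p hm he hadm
    choose E0 hE0c hE0i using fun b => ih (π0 b) (hadm0 b)
    choose E1 hE1c hE1i using fun b => ih (π1 b) (hadm1 b)
    obtain ⟨T, hTc, hTi⟩ := step_family m e (2 ^ (2 ^ (e - 1) - 1)) hm he p π0 π1 φ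
      hadm.1 hφ hsums hbit hd0 hd1 hd01 E0 E1 hE0c hE1c hE0i hE1i
    have h2 : 1 ≤ 2 ^ (e - 1) := Nat.one_le_two_pow
    have hpow : 2 ^ (2 ^ (e + 1 - 1) - 1)
        = 2 * 2 ^ (2 ^ (e - 1) - 1) * 2 ^ (2 ^ (e - 1) - 1) := by
      have h1 : 2 ^ (e + 1 - 1) = 2 * 2 ^ (e - 1) := by
        rw [Nat.add_sub_cancel]
        obtain ⟨j, rfl⟩ : ∃ j, e = j + 1 := ⟨e - 1, by omega⟩
        rw [Nat.add_sub_cancel, pow_succ]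
        ring
      rw [h1]
      have h3 : 2 * 2 ^ (e - 1) - 1 = 1 + (2 ^ (e - 1) - 1) + (2 ^ (e - 1) - 1) := by omega
      rw [h3, pow_add, pow_add, pow_one]
    have hΦ : Nonempty (Fin (2 ^ (2 ^ (e + 1 - 1) - 1))
        ≃ (Bool × Fin (2 ^ (2 ^ (e - 1) - 1)) × Fin (2 ^ (2 ^ (e - 1) - 1)))) := by
      refine ⟨Fintype.equivOfCardEq ?_⟩
      simp only [Fintype.card_fin, Fintype.card_prod, Fintype.card_bool]
      rw [hpow]; ring
    obtain ⟨Φ⟩ := hΦ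
    refine ⟨fun s => T (Φ s), fun s k hk => hTc (Φ s) k hk, ?_⟩
    intro s s' hiso
    exact Φ.injective (hTi _ _ hiso)

end STMT9

/-- Given level counts `q_k` with `2^k - 2^(k-2) ≤ q_k ≤ m^k/2` for `2 ≤ k ≤ K` and
`q_k ≤ m^k` for `k = 0, 1`, there are at least `2^(2^(K-1) - 1)` isomorphism classes
of full `m`-ary depth-`K` trees with `{0,1}` features having exactly `q_k` feature-0
nodes at each depth `k`. -/
theorem stmt_9 (m K : ℕ) (hm : 2 ≤ m) (hK : 2 ≤ K) (q : ℕ → ℕ)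
    (hq : ∀ k, 2 ≤ k → k ≤ K → 2 ^ k - 2 ^ (k - 2) ≤ q k ∧ 2 * q k ≤ m ^ k)
    (hq0 : q 0 ≤ m ^ 0) (hq1 : q 1 ≤ m ^ 1) :
    ∃ T : Fin (2 ^ (2 ^ (K - 1) - 1)) → FTree m K,
      (∀ a, ∀ k ≤ K, (T a).cnt0 k = q k) ∧ ∀ a b, (T a).Iso (T b) → a = b := by
  classical
  have hq2 := hq 2 le_rfl hK
  norm_num at hq2
  have hm3 : 3 ≤ m := by
    by_contra h
    have hmle : m ≤ 2 := by omega
    have : m ^ 2 ≤ 2 ^ 2 := Nat.pow_le_pow_left hmle 2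
    norm_num at this
    omega
  have hlow : ∀ k, 2 ≤ k → 2 ^ k - 2 ^ (k - 2) = 3 * 2 ^ (k - 2) := by
    intro k hk
    obtain ⟨j, rfl⟩ : ∃ j, k = j + 2 := ⟨k - 2, by omega⟩
    have h1 : (2:ℕ) ^ (j + 2) = 4 * 2 ^ j := by rw [pow_add]; ring
    have h2 : j + 2 - 2 = j := by omega
    rw [h1, h2]
    have : 0 < (2:ℕ) ^ j := pow_pos (by norm_num) j
    omega
  have hadm : STMT9.Adm m K q := by
    refine ⟨by simpa using hq0, by simpa using hq1, ?_, ?_⟩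
    · intro k hk2 hkK
      have h := hq k hk2 (by omega)
      rw [hlow k hk2] at h
      refine ⟨h.1, ?_⟩
      have h2 : q k ≤ m ^ k / 2 := by omega
      exact le_trans h2 (STMT9.half_le_Cc m hm3 k hk2)
    · have h := hq K hK le_rfl
      rw [hlow K hK] at h
      refine ⟨by omega, ?_⟩
      have h2 : q K ≤ m ^ K / 2 := by omega
      exact le_trans h2 (STMT9.half_le_Bb m hm3 K hK)
  obtain ⟨E, hc, hi⟩ := STMT9.families m hm3 K hK q hadm
  exact ⟨E, fun a k hk => hc a k hk, fun a b h => hi a b h⟩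
end

section
/- Let T be a full m-ary rooted tree of depth k with {0,1} features in which, for every depth k' ≤ k−1 and every node at depth k' whose depth-1 ancestor is the first child of the root, the feature is x_{k'}, while all other depth-k' non-root nodes have feature 1 − x_{k'}, for a fixed binary string (x₁,…,x_{k−1}). Then the number of walks from the root realizing the feature sequence (x₁,…,x_k) (paths to depth k along the tree) equals the number of feature-x_k leaves in the subtree rooted at the first child of the root, and this value can be any integer between 0 and m^(k−1) as the leaf features of that subtree vary. -/
namespace FTree

variable {m : ℕ}

/-- `AllFeat xs j T`: every non-leaf node of `T` at absolute depth `j + d`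
(where `T`'s root sits at absolute depth `j`) has feature `xs (j + d)`;
leaf (deepest-level) features are unconstrained. -/
def AllFeat (xs : ℕ → Bool) : ∀ {K : ℕ}, ℕ → FTree m K → Prop
  | 0, _, .leaf _ => True
  | _ + 1, j, .node b f => b = xs j ∧ ∀ i, AllFeat xs (j + 1) (f i)

/-- Number of root-to-leaf paths in `T` (rooted at absolute depth `j`) realizing the
feature sequence `xs (j), xs (j+1), …` along the way, the leaf included. -/
def pathCnt (xs : ℕ → Bool) : ∀ {K : ℕ}, ℕ → FTree m K → ℕ
  | 0, j, .leaf b => if b = xs j then 1 else 0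
  | _ + 1, j, .node b f => if b = xs j then ∑ i, pathCnt xs (j + 1) (f i) else 0

/-- Number of leaves with feature `y`. -/
def leafCnt (y : Bool) : ∀ {K : ℕ}, FTree m K → ℕ
  | 0, .leaf b => if b = y then 1 else 0
  | _ + 1, .node _ f => ∑ i, leafCnt y (f i)

end FTree


section Aux
namespace FTree

variable {m : ℕ}

lemma aux_sum_min (n M : ℕ) : ∀ c : ℕ, c ≤ n * M → ∑ i : Fin n, min M (c - i * M) = c := by
  induction n with
  | zero => intro c h; simpa using (by simpa using h : c = 0).symm
  | succ n ih =>
    intro c h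
    rw [Fin.sum_univ_succ]
    have h2 : c - M ≤ n * M := by rw [Nat.succ_mul] at h; omega
    have hrw : ∀ i : Fin n, min M (c - ((i.succ : Fin (n+1)) : ℕ) * M)
        = min M ((c - M) - (i : ℕ) * M) := by
      intro i
      have : ((i.succ : Fin (n+1)) : ℕ) * M = (i : ℕ) * M + M := by
        simp [Fin.val_succ, add_mul]
      rw [this]
      congr 1
      omega
    simp only [hrw]
    rw [ih (c - M) h2]
    have h0 : ((0 : Fin (n+1)) : ℕ) = 0 := rfl
    rw [h0]
    simp only [Nat.zero_mul, Nat.sub_zero]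
    rw [Nat.succ_mul] at h
    omega

lemma pathCnt_eq_leafCnt (xs : ℕ → Bool) :
    ∀ {K : ℕ} (j : ℕ) (T : FTree m K), AllFeat xs j T →
      pathCnt xs j T = leafCnt (xs (j + K)) T := by
  intro K
  induction K with
  | zero =>
    intro j T h
    cases T with
    | leaf b => simp [pathCnt, leafCnt]
  | succ K ih =>
    intro j T h
    cases T with
    | node b f =>
      obtain ⟨hb, hf⟩ := h
      simp only [pathCnt, leafCnt, hb, if_pos rfl]
      refine Finset.sum_congr rfl fun i _ => ?_
      rw [ih (j + 1) (f i) (hf i)]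
      have h3 : j + 1 + K = j + (K + 1) := by omega
      rw [h3]

lemma pathCnt_compl (xs : ℕ → Bool) {K : ℕ} (j : ℕ) (T : FTree m (K + 1))
    (h : AllFeat (fun j => !(xs j)) j T) : pathCnt xs j T = 0 := by
  cases T with
  | node b f =>
    obtain ⟨hb, -⟩ := h
    simp only [pathCnt, hb]
    simp

/-- Tree of depth `K` rooted at depth `j`, all features prescribed by `xs`,
realizing exactly `c` paths (for `c ≤ m ^ K`). -/
def mk (xs : ℕ → Bool) : ∀ (K : ℕ), ℕ → ℕ → FTree m K
  | 0, j, c => .leaf (if c = 1 then xs j else !(xs j))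
  | K + 1, j, c => .node (xs j) (fun i => mk xs K (j + 1) (min (m ^ K) (c - (i : ℕ) * m ^ K)))

lemma allFeat_mk (xs : ℕ → Bool) : ∀ (K j c : ℕ), AllFeat xs j (mk (m := m) xs K j c) := by
  intro K
  induction K with
  | zero => intro j c; trivial
  | succ K ih => intro j c; exact ⟨rfl, fun i => ih (j + 1) _⟩

lemma pathCnt_mk (xs : ℕ → Bool) : ∀ (K j c : ℕ), c ≤ m ^ K →
    pathCnt xs j (mk (m := m) xs K j c) = c := by
  intro K
  induction K with
  | zero =>
    intro j c hc
    rw [pow_zero] at hc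
    interval_cases c <;> simp [mk, pathCnt]
  | succ K ih =>
    intro j c hc
    simp only [mk, pathCnt, if_pos rfl]
    have : ∀ i : Fin m, pathCnt xs (j + 1) (mk (m := m) xs K (j + 1) (min (m ^ K) (c - (i : ℕ) * m ^ K)))
        = min (m ^ K) (c - (i : ℕ) * m ^ K) := fun i => ih (j + 1) _ (Nat.min_le_left _ _)
    simp only [this]
    exact aux_sum_min m (m ^ K) c (by rw [pow_succ, mul_comm] at hc; exact hc)

end FTree
end Aux

/-- In a full `m`-ary rooted tree of depth `K + 1` (`K ≥ 1`, so depth `k = K + 1 ≥ 2`)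
whose first-child subtree carries the prescribed features `x₁, …, x_{k−1}` at depths
`1, …, k−1` while all other non-root, non-leaf nodes carry the complementary features,
the number of walks from the root realizing `(x₁, …, x_k)` equals the number of
feature-`x_k` leaves in the first-child subtree; and as the leaf features vary this
number takes every value between `0` and `m^(k−1)`. -/
theorem stmt_19 (m K : ℕ) (hm : 2 ≤ m) (hK : 1 ≤ K) (xs : ℕ → Bool)
    (i0 : Fin m) (hi0 : (i0 : ℕ) = 0) :
    (∀ (b : Bool) (f : Fin m → FTree m K),
      FTree.AllFeat xs 1 (f i0) →
      (∀ i : Fin m, i ≠ i0 → FTree.AllFeat (fun j => !(xs j)) 1 (f i)) →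
      (∑ i, FTree.pathCnt xs 1 (f i)) = FTree.leafCnt (xs (K + 1)) (f i0))
    ∧ ∀ c : ℕ, c ≤ m ^ K →
        ∃ (b : Bool) (f : Fin m → FTree m K),
          FTree.AllFeat xs 1 (f i0)
          ∧ (∀ i : Fin m, i ≠ i0 → FTree.AllFeat (fun j => !(xs j)) 1 (f i))
          ∧ (∑ i, FTree.pathCnt xs 1 (f i)) = c := by
  obtain ⟨K, rfl⟩ : ∃ K', K = K' + 1 := ⟨K - 1, by omega⟩
  constructor
  · intro b f h0 hrest
    rw [Finset.sum_eq_single i0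
      (fun i _ hne => FTree.pathCnt_compl xs 1 (f i) (hrest i hne))
      (fun h => absurd (Finset.mem_univ i0) h)]
    rw [FTree.pathCnt_eq_leafCnt xs 1 (f i0) h0]
    have h3 : 1 + (K + 1) = K + 1 + 1 := by omega
    rw [h3]
  · intro c hc
    refine ⟨true, fun i => if i = i0 then FTree.mk xs (K + 1) 1 c
      else FTree.mk (fun j => !(xs j)) (K + 1) 1 0, ?_, ?_, ?_⟩
    · simp only [if_pos rfl]; exact FTree.allFeat_mk xs (K + 1) 1 c
    · intro i hi; simp only [if_neg hi]; exact FTree.allFeat_mk _ (K + 1) 1 0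
    · rw [Finset.sum_eq_single i0 ?_ (fun h => absurd (Finset.mem_univ i0) h)]
      · simp only [if_pos rfl]
        exact FTree.pathCnt_mk xs (K + 1) 1 c hc
      · intro i _ hne
        simp only [if_neg hne]
        exact FTree.pathCnt_compl xs 1 _ (FTree.allFeat_mk _ (K + 1) 1 0)
end
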